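/- arXiv:2512.07711 — 5 statements merged into one kernel-verified Lean document; each statement's English description precedes it below -/
import Mathlib

section
/- The family B of non-piecewise-syndetic subsets of ω is an ideal: it contains ∅, is closed under taking subsets, and is closed under finite unions. -/
open Classical Filter

/-- A set of naturals is thick if it contains arbitrarily long intervals. -/
def Thick (T : Set ℕ) : Prop := ∀ p : ℕ, ∃ n : ℕ, ∀ k ≤ p, n + k ∈ T

/-- A set of naturals is syndetic if it has gaps of bounded length. -/
def Syndetic (S : Set ℕ) : Prop := ∃ p : ℕ, ∀ a : ℕ, ∃ k ≤ p, a + k ∈ S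

/-- Piecewise syndetic: intersection of a thick set and a syndetic set. -/
def PiecewiseSyndetic (P : Set ℕ) : Prop :=
  ∃ T S : Set ℕ, Thick T ∧ Syndetic S ∧ P = T ∩ S

/-- `A` contains an arithmetic progression of length `n`. -/
def HasAPSet (A : Set ℕ) (n : ℕ) : Prop :=
  ∃ a r : ℕ, 0 < r ∧ ∀ i < n, a + i * r ∈ A

/-- The standard ultrametric on Cantor space `2^ω`:
`ρ(x,y) = 2^{-min{i : x i ≠ y i}}` for `x ≠ y`, and `0` otherwise. -/
noncomputable def rho (x y : ℕ → Bool) : ℝ :=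
  if h : x = y then 0
  else (2 : ℝ) ^ (-(Nat.find (Function.ne_iff.mp h) : ℤ))

/-- Open ball in Cantor space with respect to `rho`. -/
def ball (x : ℕ → Bool) (ε : ℝ) : Set (ℕ → Bool) := {y | rho y x < ε}

/-- Metric porosity in Cantor space. -/
def Porous (E : Set (ℕ → Bool)) : Prop :=
  ∃ α : ℝ, 0 < α ∧ α < 1 ∧ ∃ ε₀ : ℝ, 0 < ε₀ ∧
    ∀ ε : ℝ, 0 < ε → ε ≤ ε₀ → ∀ x : ℕ → Bool,
      ∃ y : ℕ → Bool, ball y (α * ε) ⊆ ball x ε \ E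

/-- σ-porous: covered by countably many porous sets. -/
def SigmaPorous (E : Set (ℕ → Bool)) : Prop :=
  ∃ F : ℕ → Set (ℕ → Bool), (∀ n, Porous (F n)) ∧ E ⊆ ⋃ n, F n

/-- The basic clopen cylinder `[s]` of all extensions of a finite string `s`. -/
def Cyl (s : List Bool) : Set (ℕ → Bool) := {x | ∀ i < s.length, x i = s.getD i false}

/-- A point of Cantor space, viewed as a subset of ω, is thick. -/
def ThickB (x : ℕ → Bool) : Prop := ∀ p : ℕ, ∃ n : ℕ, ∀ k ≤ p, x (n + k) = true

/-- `x`, viewed as a subset of ω, contains an arithmetic progression of length `n`. -/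
def HasAP (x : ℕ → Bool) (n : ℕ) : Prop :=
  ∃ a r : ℕ, 0 < r ∧ ∀ i < n, x (a + i * r) = true

/-- `E_n`: points of Cantor space with no arithmetic progression of length `n`. -/
def ESet (n : ℕ) : Set (ℕ → Bool) := {x | ¬ HasAP x n}

/-- The van der Waerden ideal, as a subset of Cantor space. -/
def vdW : Set (ℕ → Bool) := ⋃ n, ESet n

/-- Ideal on ω, with members represented as points of Cantor space. -/
def IsIdealB (I : Set (ℕ → Bool)) : Prop :=
  (fun _ => false) ∈ I ∧
  (∀ x y : ℕ → Bool, (∀ n, x n = true → y n = true) → y ∈ I → x ∈ I) ∧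
  (∀ x y : ℕ → Bool, x ∈ I → y ∈ I → (fun n => x n || y n) ∈ I)

/-- `n`-porosity: every cylinder has a depth-`n` subcylinder missing `A`. -/
def NPorous (n : ℕ) (A : Set (ℕ → Bool)) : Prop :=
  ∀ s : List Bool, ∃ t : List Bool, t.length = n ∧ Cyl (s ++ t) ∩ A = ∅

/-- The length-`n` initial segment of `x` as a finite string. -/
def initSeg (x : ℕ → Bool) (n : ℕ) : List Bool := (List.range n).map x

/-- `S_n(A)`: the maximal size of `A ∩ {m, …, m+n}` over all `m`. -/
noncomputable def Sn (A : Set ℕ) (n : ℕ) : ℕ :=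
  sSup {k : ℕ | ∃ m : ℕ, (A ∩ Set.Icc m (m + n)).ncard = k}

/-- `A = {n², n²+1 : n ≥ 1}`. -/
def ASet : Set ℕ := {k | ∃ n : ℕ, 1 ≤ n ∧ (k = n ^ 2 ∨ k = n ^ 2 + 1)}

/-- `P = {x ∈ 2^ω : x(k) = 0 for all k ∉ A}`. -/
def CantorP : Set (ℕ → Bool) := {x | ∀ k, k ∉ ASet → x k = false}

/-- Auxiliary: `P` contains arbitrarily long runs with gaps ≤ `p`. -/
def PWS (p : ℕ) (P : Set ℕ) : Prop :=
  ∀ L : ℕ, ∃ n : ℕ, ∀ m : ℕ, n ≤ m → m + p ≤ n + L → ∃ j ≤ p, m + j ∈ P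

lemma ps_to_pws {P : Set ℕ} (h : PiecewiseSyndetic P) : ∃ p, PWS p P := by
  obtain ⟨T, S, hT, ⟨p, hS⟩, rfl⟩ := h
  refine ⟨p, fun L => ?_⟩
  obtain ⟨n, hn⟩ := hT L
  refine ⟨n, fun m hnm hmL => ?_⟩
  obtain ⟨j, hj, hjS⟩ := hS m
  refine ⟨j, hj, ?_, hjS⟩
  have he : m + j = n + (m - n + j) := by omega
  rw [he]
  exact hn _ (by omega)

lemma pws_shift {p : ℕ} {P : Set ℕ} (h : PWS p P) :
    ∀ L N : ℕ, ∃ s : ℕ, N ≤ s ∧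
      ∀ m, s ≤ m → m + p ≤ s + L → ∃ j ≤ p, m + j ∈ P := by
  intro L N
  obtain ⟨n, hn⟩ := h (L + N)
  exact ⟨n + N, by omega, fun m hm hmL => hn m (by omega) (by omega)⟩

/-- Recursively spaced starting points of long runs. -/
noncomputable def seqRec (f : ℕ → ℕ → ℕ) (p : ℕ) : ℕ → ℕ
  | 0 => f 0 0
  | (L + 1) => f (L + 1) (seqRec f p L + L + p + 1)

lemma pws_to_ps {p : ℕ} {P : Set ℕ} (h : PWS p P) : PiecewiseSyndetic P := by
  choose f hf1 hf2 using pws_shift h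
  set s : ℕ → ℕ := seqRec f p with hs
  have hs_succ : ∀ L, s L + L + p + 1 ≤ s (L + 1) := by
    intro L
    have : s (L + 1) = f (L + 1) (s L + L + p + 1) := by simp [hs, seqRec]
    rw [this]
    exact hf1 _ _
  have hs_win : ∀ L m, s L ≤ m → m + p ≤ s L + L → ∃ j ≤ p, m + j ∈ P := by
    intro L
    cases L with
    | zero =>
        have : s 0 = f 0 0 := by simp [hs, seqRec]
        rw [this]; exact hf2 0 0
    | succ L =>
        have : s (L + 1) = f (L + 1) (s L + L + p + 1) := by simp [hs, seqRec]
        rw [this]; exact hf2 (L + 1) _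
  have hgap : ∀ L1 L2, L1 < L2 → s L1 + L1 + p + 1 ≤ s L2 := by
    intro L1 L2 h12
    induction L2 with
    | zero => omega
    | succ L2 ih =>
        rcases Nat.lt_succ_iff_lt_or_eq.mp h12 with h' | h'
        · have h1 := ih h'
          have h2 := hs_succ L2
          omega
        · subst h'; exact hs_succ L1
  set T : Set ℕ := {x | ∃ L, s L ≤ x ∧ x ≤ s L + L} with hTdef
  refine ⟨T ∪ P, P ∪ Tᶜ, ?_, ?_, ?_⟩
  · intro q
    refine ⟨s q, fun k hk => Or.inl ⟨q, by omega, by omega⟩⟩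
  · refine ⟨p, fun a => ?_⟩
    by_cases hc : ∀ k ≤ p, a + k ∈ T
    · obtain ⟨L0, hL0a, hL0b⟩ := hc 0 (by omega)
      obtain ⟨L1, hL1a, hL1b⟩ := hc p le_rfl
      have hLeq : L0 = L1 := by
        by_contra hne
        rcases Nat.lt_or_ge L0 L1 with hlt | hge
        · have := hgap L0 L1 hlt; omega
        · have hlt : L1 < L0 := by omega
          have := hgap L1 L0 hlt; omega
      subst hLeq
      obtain ⟨j, hj, hjP⟩ := hs_win L0 a (by omega) (by omega)
      exact ⟨j, hj, Or.inl hjP⟩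
    · push_neg at hc
      obtain ⟨k, hk, hkT⟩ := hc
      exact ⟨k, hk, Or.inr hkT⟩
  · ext x
    constructor
    · intro hx
      exact ⟨Or.inr hx, Or.inl hx⟩
    · rintro ⟨h1, h2⟩
      rcases h2 with h2 | h2
      · exact h2
      · rcases h1 with h1 | h1
        · exact absurd h1 h2
        · exact h1

/-- The Brown ideal (non-piecewise-syndetic sets) is an ideal:
it contains ∅, is closed under subsets and under finite unions. -/
theorem brown_is_ideal :
    ¬ PiecewiseSyndetic (∅ : Set ℕ) ∧
    (∀ A B : Set ℕ, A ⊆ B → ¬ PiecewiseSyndetic B → ¬ PiecewiseSyndetic A) ∧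
    (∀ A B : Set ℕ, ¬ PiecewiseSyndetic A → ¬ PiecewiseSyndetic B →
      ¬ PiecewiseSyndetic (A ∪ B)) := by
  refine ⟨?_, ?_, ?_⟩
  · intro h
    obtain ⟨p, hp⟩ := ps_to_pws h
    obtain ⟨n, hn⟩ := hp p
    obtain ⟨j, _, hj⟩ := hn n le_rfl (by omega)
    exact hj
  · intro A B hAB hB hA
    apply hB
    obtain ⟨T, S, hT, hS, hEq⟩ := hA
    refine ⟨T ∪ B, S ∪ B, ?_, ?_, ?_⟩
    · intro q
      obtain ⟨n, hn⟩ := hT q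
      exact ⟨n, fun k hk => Or.inl (hn k hk)⟩
    · obtain ⟨q, hq⟩ := hS
      refine ⟨q, fun a => ?_⟩
      obtain ⟨k, hk, hkS⟩ := hq a
      exact ⟨k, hk, Or.inl hkS⟩
    · ext x
      constructor
      · intro hx
        exact ⟨Or.inr hx, Or.inr hx⟩
      · rintro ⟨h1, h2⟩
        rcases h1 with h1 | h1
        · rcases h2 with h2 | h2
          · apply hAB
            rw [hEq]
            exact ⟨h1, h2⟩
          · exact h2
        · exact h1
  · intro A B hA hB hU
    obtain ⟨p, hp⟩ := ps_to_pws hU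
    have hA' : ∀ q, ¬ PWS q A := fun q hq => hA (pws_to_ps hq)
    apply hB
    apply pws_to_ps (p := p)
    intro L'
    have hnA := hA' L'
    unfold PWS at hnA
    push_neg at hnA
    obtain ⟨L, hL⟩ := hnA
    obtain ⟨n, hn⟩ := hp L
    obtain ⟨m, hm1, hm2, hm3⟩ := hL n
    refine ⟨m, fun m' hm' hm'L => ?_⟩
    obtain ⟨j, hj, hjU⟩ := hn m' (by omega) (by omega)
    refine ⟨j, hj, ?_⟩
    rcases hjU with hjA | hjB
    · exfalso
      have he : m' + j = m + (m' - m + j) := by omega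
      rw [he] at hjA
      exact hm3 (m' - m + j) (by omega) hjA
    · exact hjB
end

section
/- Every piecewise syndetic subset of ω contains arbitrarily long arithmetic progressions; consequently the van der Waerden ideal W is contained in the Brown ideal B. -/
open Classical Filter

/-!
If every `m` has `m + g m ∈ S` with `g m ≤ p`, colour `m` by `g (n₀ + m)`, where `T` contains the
interval `[n₀, n₀ + N + p]`. The finite van der Waerden theorem yields a progression `a + i d ≤ N`
on which the colour is a constant `v`; shifted by `n₀ + v` it lies in `S` and in that interval.
The finite van der Waerden theorem follows from Mathlib's infinite one by compactness: an
ultrafilter limit of counterexample colourings of `[0, N]`, `N → ∞`, would be a counterexample on `ℕ`.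
-/

theorem exists_bound_forall_exists_mono_ap (κ : Type*) [Finite κ] (n : ℕ) :
    ∃ N, ∀ c : ℕ → κ, ∃ a d, 0 < d ∧ a + n * d ≤ N ∧ ∃ v, ∀ i < n, c (a + i * d) = v := by
  by_contra! h
  choose c hc using h
  let U := Ultrafilter.of (atTop : Filter ℕ)
  have hlim : ∀ m, ∃ v, ∀ᶠ N in (U : Filter ℕ), c N m = v := fun m =>
    Ultrafilter.eventually_exists_iff.1 (Eventually.of_forall fun N => ⟨c N m, rfl⟩)
  choose C hC using hlim
  obtain ⟨d, hd, b, v, hmono⟩ := Combinatorics.exists_mono_homothetic_copy (Finset.range n) C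
  have hmonoU : ∀ᶠ N in (U : Filter ℕ), ∀ i ∈ Finset.range n, c N (b + i * d) = v := by
    refine (eventually_all_finset _).2 fun i hi => ?_
    filter_upwards [hC (b + i * d)] with N hN
    rw [hN, ← hmono i hi, smul_eq_mul, add_comm, mul_comm]
  have hlarge : ∀ᶠ N in (U : Filter ℕ), b + n * d ≤ N :=
    Ultrafilter.of_le atTop (eventually_ge_atTop _)
  obtain ⟨N, hmonoN, hN⟩ := (hmonoU.and hlarge).exists
  obtain ⟨i, hi, hne⟩ := hc N b d hd hN v
  exact hne (hmonoN i (Finset.mem_range.2 hi))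

theorem PiecewiseSyndetic.hasAPSet {P : Set ℕ} (hP : PiecewiseSyndetic P) (n : ℕ) :
    HasAPSet P n := by
  obtain ⟨T, S, hT, ⟨p, hS⟩, rfl⟩ := hP
  choose g hgp hgS using hS
  obtain ⟨N, hN⟩ := exists_bound_forall_exists_mono_ap (Fin (p + 1)) n
  obtain ⟨n₀, hn₀⟩ := hT (N + p)
  obtain ⟨a, d, hd, hle, v, hv⟩ := hN fun m => ⟨g (n₀ + m), Nat.lt_succ_of_le (hgp _)⟩
  refine ⟨n₀ + a + v, d, hd, fun i hi => ?_⟩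
  have hgi : g (n₀ + (a + i * d)) = v := congrArg Fin.val (hv i hi)
  have hid : i * d ≤ n * d := Nat.mul_le_mul_right d hi.le
  have hshift : n₀ + a + v + i * d = n₀ + (a + i * d + g (n₀ + (a + i * d))) := by omega
  rw [hshift]
  refine ⟨hn₀ _ ?_, add_assoc n₀ _ _ ▸ hgS _⟩
  have := hgp (n₀ + (a + i * d))
  omega

/-- Every piecewise syndetic set contains arbitrarily long
arithmetic progressions; hence the van der Waerden ideal is contained in
the Brown ideal. -/
theorem piecewiseSyndetic_hasAP_and_vdW_subset_brown :
    (∀ P : Set ℕ, PiecewiseSyndetic P → ∀ n : ℕ, HasAPSet P n) ∧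
    (∀ A : Set ℕ, (∃ n : ℕ, ¬ HasAPSet A n) → ¬ PiecewiseSyndetic A) := by
  refine ⟨fun P hP n => hP.hasAPSet n, ?_⟩
  rintro A ⟨n, hn⟩ hA
  exact hn (hA.hasAPSet n)
end

section
/- No summable ideal is a σ-porous subset of the Cantor space: if (a_n) is a sequence of positive reals with ∑ a_n = ∞ and a_n → 0, then the set {A ⊆ ω : ∑_{n∈A} a_n < ∞}, viewed as a subset of 2^ω via characteristic functions, is not a countable union of porous sets. -/
open Classical Filter

/-!
Inside every cylinder of depth at least some `L₀`, a porous set misses a whole subcylinder only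
`c` levels deeper. Given porous sets `F n`, build a point block by block: block `n` is a run of
zeros, long enough for `‖a i‖` to have become small, followed by `c n` digits chosen so that the
cylinder fixed so far misses `F n`. The limit point avoids every `F n`, and block `n` contributes
at most `2⁻ⁿ` to `∑_{x i} ‖a i‖`, so the point lies in the summable ideal.
-/

open PiNat

attribute [local instance] PiNat.dist

theorem rho_eq_dist (x y : ℕ → Bool) : rho x y = dist x y := by
  by_cases h : x = y
  · simp [rho, h, PiNat.dist_self]
  · have hfd : Nat.find (Function.ne_iff.mp h) = firstDiff x y :=
      (Nat.find_eq_iff _).2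
        ⟨apply_firstDiff_ne h, fun _ hm => not_not.2 (apply_eq_of_lt_firstDiff hm)⟩
    rw [dist_eq_of_ne h, rho, dif_neg h, hfd, zpow_neg, zpow_natCast, one_div, inv_pow]

theorem mem_cylinder_of_rho_lt {x y : ℕ → Bool} {n : ℕ} (h : rho y x < (1 / 2) ^ n) :
    y ∈ cylinder x n := fun _ hi => apply_eq_of_dist_lt (rho_eq_dist y x ▸ h) hi.le

theorem rho_le_of_mem_cylinder {x y : ℕ → Bool} {n : ℕ} (h : y ∈ cylinder x n) :
    rho y x ≤ (1 / 2) ^ n := rho_eq_dist y x ▸ mem_cylinder_iff_dist_le.1 h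

theorem Porous.exists_disjoint_cylinder {F : Set (ℕ → Bool)} (hF : Porous F) :
    ∃ c L₀ : ℕ, ∀ x m, L₀ ≤ m → ∃ y ∈ cylinder x m, Disjoint (cylinder y (m + c)) F := by
  obtain ⟨α, hα, -, ε₀, hε₀, hpor⟩ := hF
  obtain ⟨c, hc⟩ := exists_pow_lt_of_lt_one hα (by norm_num : (1 / 2 : ℝ) < 1)
  obtain ⟨L₀, hL₀⟩ := exists_pow_lt_of_lt_one hε₀ (by norm_num : (1 / 2 : ℝ) < 1)
  refine ⟨c, L₀, fun x m hm => ?_⟩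
  have hε : (1 / 2 : ℝ) ^ m ≤ ε₀ :=
    (pow_le_pow_of_le_one (by norm_num) (by norm_num) hm).trans hL₀.le
  obtain ⟨y, hy⟩ := hpor _ (by positivity) hε x
  have hcyl : cylinder y (m + c) ⊆ ball y (α * (1 / 2) ^ m) := fun z hz =>
    calc rho z y ≤ (1 / 2) ^ (m + c) := rho_le_of_mem_cylinder hz
      _ = (1 / 2) ^ c * (1 / 2) ^ m := by ring
      _ < α * (1 / 2) ^ m := by gcongr
  have hyy : y ∈ ball y (α * (1 / 2) ^ m) := by
    change rho y y < _
    rw [rho_eq_dist, PiNat.dist_self]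
    positivity
  exact ⟨y, mem_cylinder_of_rho_lt (hy hyy).1,
    Set.disjoint_left.2 fun z hz hzF => (hy (hcyl hz)).2 hzF⟩

theorem exists_forall_mem_of_exists_mem_cylinder {E : ℕ → Type*} [∀ n, Nonempty (E n)]
    {ℓ : ℕ → ℕ} (hℓ : StrictMono ℓ) {P : ℕ → Set (∀ n, E n)}
    (hP : ∀ n, ∀ y ∈ P n, cylinder y (ℓ (n + 1)) ⊆ P n)
    (hext : ∀ n x, ∃ y ∈ cylinder x (ℓ n), y ∈ P n) : ∃ x, ∀ n, x ∈ P n := by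
  choose next hnext_cyl hnext_mem using hext
  let seq : ℕ → ∀ n, E n := fun n => Nat.rec (Classical.arbitrary _) next n
  have hseq : ∀ n k, seq (n + k) ∈ cylinder (seq n) (ℓ n) := by
    intro n k
    induction k with
    | zero => exact self_mem_cylinder _ _
    | succ k ih =>
      exact fun i hi =>
        (hnext_cyl _ _ i (hi.trans_le (hℓ.monotone (Nat.le_add_right n k)))).trans (ih i hi)
  have hagree : ∀ m n, n ≤ m → ∀ i < ℓ n, seq m i = seq n i := fun m n h => by
    simpa [Nat.add_sub_cancel' h] using hseq n (m - n)
  refine ⟨fun i => seq (i + 1) i, fun n => hP n _ (hnext_mem n (seq n)) fun i hi => ?_⟩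
  rcases le_total (i + 1) (n + 1) with h | h
  · exact (hagree _ _ h i (hℓ.id_le (i + 1))).symm
  · exact hagree _ _ h i hi

theorem summable_of_sum_Ico_le {g b : ℕ → ℝ} {ℓ : ℕ → ℕ} (hg : ∀ i, 0 ≤ g i)
    (hb : Summable b) (hℓ : StrictMono ℓ) (hℓ0 : ℓ 0 = 0)
    (hblock : ∀ n, ∑ i ∈ Finset.Ico (ℓ n) (ℓ (n + 1)), g i ≤ b n) : Summable g := by
  have hb0 : ∀ n, 0 ≤ b n := fun n => (Finset.sum_nonneg fun i _ => hg i).trans (hblock n)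
  have hpartial : ∀ n, ∑ i ∈ Finset.range (ℓ n), g i ≤ ∑ k ∈ Finset.range n, b k := by
    intro n
    induction n with
    | zero => simp [hℓ0]
    | succ n ih =>
      rw [Finset.sum_range_succ, ← Finset.sum_range_add_sum_Ico _ (hℓ.monotone n.le_succ)]
      exact add_le_add ih (hblock n)
  refine summable_of_sum_range_le hg (c := ∑' k, b k) fun n => ?_
  calc ∑ i ∈ Finset.range n, g i ≤ ∑ i ∈ Finset.range (ℓ n), g i :=
        Finset.sum_le_sum_of_subset_of_nonneg (Finset.range_subset_range.2 (hℓ.id_le n))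
          fun i _ _ => hg i
    _ ≤ ∑ k ∈ Finset.range n, b k := hpartial n
    _ ≤ ∑' k, b k := hb.sum_le_tsum _ fun k _ => hb0 k

theorem tendsto_sum_norm_Ico_add {E : Type*} [SeminormedAddCommGroup E] {a : ℕ → E}
    (ha : Tendsto a atTop (nhds 0)) (c : ℕ) :
    Tendsto (fun m => ∑ i ∈ Finset.Ico m (m + c), ‖a i‖) atTop (nhds 0) := by
  simp_rw [Finset.sum_Ico_eq_sum_range, add_tsub_cancel_left]
  simpa using tendsto_finsetSum (Finset.range c) fun j _ => ha.norm.comp (tendsto_add_atTop_nat j)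

section Gaps

variable {ℓ s : ℕ → ℕ}

theorem exists_eq_false_on_gaps_forall_notMem (hℓs : ∀ n, ℓ n < s n)
    (hsℓ : ∀ n, s n ≤ ℓ (n + 1)) {F : ℕ → Set (ℕ → Bool)}
    (hF : ∀ n x, ∃ y ∈ cylinder x (s n), Disjoint (cylinder y (ℓ (n + 1))) (F n)) :
    ∃ x : ℕ → Bool, (∀ n, ∀ i ∈ Set.Ico (ℓ n) (s n), x i = false) ∧ ∀ n, x ∉ F n := by
  set P : ℕ → Set (ℕ → Bool) := fun n =>
    {y | (∀ i ∈ Set.Ico (ℓ n) (s n), y i = false) ∧ Disjoint (cylinder y (ℓ (n + 1))) (F n)}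
  have hP : ∀ n, ∀ y ∈ P n, cylinder y (ℓ (n + 1)) ⊆ P n := by
    rintro n y ⟨hgap, hdisj⟩ z hz
    exact ⟨fun i hi => (hz i (hi.2.trans_le (hsℓ n))).trans (hgap i hi),
      mem_cylinder_iff_eq.1 hz ▸ hdisj⟩
  have hext : ∀ n x, ∃ y ∈ cylinder x (ℓ n), y ∈ P n := by
    intro n x
    obtain ⟨y, hy, hdisj⟩ := hF n fun i => if i < ℓ n then x i else false
    exact ⟨y, fun i hi => (hy i (hi.trans (hℓs n))).trans (if_pos hi),
      fun i hi => (hy i hi.2).trans (if_neg hi.1.not_gt), hdisj⟩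
  obtain ⟨x, hx⟩ := exists_forall_mem_of_exists_mem_cylinder
    (strictMono_nat_of_lt_succ fun n => (hℓs n).trans_le (hsℓ n)) hP hext
  exact ⟨x, fun n => (hx n).1, fun n => (hx n).2.notMem_of_mem_left (self_mem_cylinder x _)⟩

theorem summable_ite_of_eq_false_on_gaps {E : Type*} [NormedAddCommGroup E] [CompleteSpace E]
    {a : ℕ → E} {b : ℕ → ℝ} {x : ℕ → Bool} (hℓ0 : ℓ 0 = 0) (hℓs : ∀ n, ℓ n < s n)
    (hsℓ : ∀ n, s n ≤ ℓ (n + 1)) (hx : ∀ n, ∀ i ∈ Set.Ico (ℓ n) (s n), x i = false)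
    (hb : Summable b) (ha : ∀ n, ∑ i ∈ Finset.Ico (s n) (ℓ (n + 1)), ‖a i‖ ≤ b n) :
    Summable fun i => if x i = true then a i else 0 := by
  refine Summable.of_norm <| summable_of_sum_Ico_le (fun _ => norm_nonneg _) hb
    (strictMono_nat_of_lt_succ fun n => (hℓs n).trans_le (hsℓ n)) hℓ0 fun n => ?_
  rw [← Finset.sum_Ico_consecutive _ (hℓs n).le (hsℓ n), Finset.sum_eq_zero, zero_add]
  · exact (Finset.sum_le_sum fun i _ => by split_ifs <;> simp).trans (ha n)
  · intro i hi
    simp [hx n i (Finset.mem_Ico.1 hi)]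

end Gaps

theorem summable_ideal_not_sigmaPorous_general (a : ℕ → ℝ)
    (hzero : Tendsto a atTop (nhds 0)) :
    ¬ SigmaPorous {x : ℕ → Bool | Summable fun n => if x n = true then a n else 0} := by
  rintro ⟨F, hF, hcover⟩
  choose c L₀ hc using fun n => (hF n).exists_disjoint_cylinder
  have hwindow : ∀ n, ∀ᶠ m in atTop,
      L₀ n ≤ m ∧ ∑ i ∈ Finset.Ico m (m + c n), ‖a i‖ ≤ (1 / 2) ^ n := fun n =>
    (eventually_ge_atTop _).and
      ((tendsto_sum_norm_Ico_add hzero (c n)).eventually (ge_mem_nhds (by positivity)))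
  choose N hN using fun n => eventually_atTop.1 (hwindow n)
  set ℓ : ℕ → ℕ := fun n => ∑ k ∈ Finset.range n, (N k + 1 + c k)
  set s : ℕ → ℕ := fun n => ℓ n + N n + 1
  have hℓs : ∀ n, ℓ n < s n := fun n => by simp only [s]; omega
  have hℓ_succ : ∀ n, ℓ (n + 1) = s n + c n := fun n => by
    simp only [ℓ, s, Finset.sum_range_succ]; ring
  have hsN : ∀ n, N n ≤ s n := fun n => by simp only [s]; omega
  have hsℓ_le : ∀ n, s n ≤ ℓ (n + 1) := fun n => by rw [hℓ_succ]; omega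
  obtain ⟨x, hgap, hxF⟩ := exists_eq_false_on_gaps_forall_notMem hℓs hsℓ_le
    fun n y => hℓ_succ n ▸ hc n y (s n) (hN n _ (hsN n)).1
  have hx : Summable fun i => if x i = true then a i else 0 :=
    summable_ite_of_eq_false_on_gaps (by simp [ℓ]) hℓs hsℓ_le hgap
      summable_geometric_two fun n => hℓ_succ n ▸ (hN n _ (hsN n)).2
  obtain ⟨n, hn⟩ := Set.mem_iUnion.1 (hcover hx)
  exact hxF n hn

/-- No summable ideal is σ-porous in Cantor space. -/
theorem summable_ideal_not_sigmaPorous (a : ℕ → ℝ) (hpos : ∀ n, 0 < a n)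
    (hdiv : Tendsto (fun N => ∑ i ∈ Finset.range N, a i) atTop atTop)
    (hzero : Tendsto a atTop (nhds 0)) :
    ¬ SigmaPorous {x : ℕ → Bool | Summable fun n => if x n = true then a n else 0} :=
  summable_ideal_not_sigmaPorous_general a hzero
end

section
/- For each n ∈ ω, the set E_n of subsets of ω containing no arithmetic progression of length n is a porous subset of the Cantor space: with α = 2^{-(n+2)} and ε₀ = 1, for every ε ∈ (0, ε₀) and every x₀ ∈ 2^ω there exists y₀ with B(y₀, αε) ⊆ B(x₀, ε) \ E_n. -/
open Classical Filter

lemma agree_of_rho_lt (y z : ℕ → Bool) (m : ℕ)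
    (h : rho y z < (2 : ℝ) ^ (-(m : ℤ))) : ∀ i ≤ m, y i = z i := by
  intro i hi
  by_cases hyz : y = z
  · rw [hyz]
  · rw [rho, dif_neg hyz] at h
    have hk : (m : ℤ) < (Nat.find (Function.ne_iff.mp hyz) : ℤ) := by
      have := (zpow_lt_zpow_iff_right₀ (by norm_num : (1:ℝ) < 2)).mp h
      omega
    have hik : i < Nat.find (Function.ne_iff.mp hyz) := by exact_mod_cast lt_of_le_of_lt (by exact_mod_cast hi) (by exact_mod_cast hk)
    have := Nat.find_min (Function.ne_iff.mp hyz) hik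
    simpa using this

lemma rho_le_of_agree (y z : ℕ → Bool) (m : ℕ)
    (h : ∀ i < m, y i = z i) : rho y z ≤ (2 : ℝ) ^ (-(m : ℤ)) := by
  by_cases hyz : y = z
  · rw [rho, dif_pos hyz]
    positivity
  · rw [rho, dif_neg hyz]
    have hk : m ≤ Nat.find (Function.ne_iff.mp hyz) := by
      by_contra hlt
      exact (Nat.find_spec (Function.ne_iff.mp hyz)) (h _ (by omega))
    apply zpow_le_zpow_right₀ (by norm_num : (1:ℝ) ≤ 2)
    omega

/-- Each `E_n` is porous with `α = 2^{-(n+2)}` and `ε₀ = 1`. -/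
theorem ESet_porous (n : ℕ) :
    ∀ ε : ℝ, 0 < ε → ε < 1 → ∀ x₀ : ℕ → Bool,
      ∃ y₀ : ℕ → Bool, ball y₀ (((2 : ℝ) ^ (n + 2))⁻¹ * ε) ⊆ ball x₀ ε \ ESet n := by
  intro ε hε hε1 x₀
  have hN : ∃ N : ℕ, (2 : ℝ) ^ (-(N : ℤ)) ≤ ε := by
    obtain ⟨N, hN⟩ := exists_pow_lt_of_lt_one hε (by norm_num : (1:ℝ)/2 < 1)
    exact ⟨N, by rw [zpow_neg, ← one_div, div_pow] at *; simpa using hN.le⟩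
  set N := Nat.find hN with hNdef
  have hNspec : (2 : ℝ) ^ (-(N : ℤ)) ≤ ε := Nat.find_spec hN
  have hN1 : 1 ≤ N := by
    rcases Nat.eq_zero_or_pos N with h0 | h
    · exfalso; rw [h0] at hNspec; simp at hNspec; linarith
    · exact h
  obtain ⟨K, hK⟩ : ∃ K, N = K + 1 := ⟨N - 1, by omega⟩
  have hεK : ε < (2 : ℝ) ^ (-(K : ℤ)) := by
    have := Nat.find_min hN (by omega : K < N)
    push_neg at this
    exact this
  have hKε : (2 : ℝ) ^ (-((K : ℤ) + 1)) ≤ ε := by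
    rw [hK] at hNspec
    have he : (-((K : ℤ) + 1)) = (-(((K + 1 : ℕ)) : ℤ)) := by push_cast; ring
    rw [he]; exact hNspec
  refine ⟨fun i => if i ≤ K + 1 then x₀ i else true, ?_⟩
  intro y hy
  set y₀ : ℕ → Bool := fun i => if i ≤ K + 1 then x₀ i else true with hy₀
  have hyy₀ : rho y y₀ < (2 : ℝ) ^ (-((K + n + 2 : ℕ) : ℤ)) := by
    have h1 : ((2 : ℝ) ^ (n + 2))⁻¹ * ε < ((2 : ℝ) ^ (n + 2))⁻¹ * (2 : ℝ) ^ (-(K : ℤ)) := by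
      apply mul_lt_mul_of_pos_left hεK (by positivity)
    have h2 : ((2 : ℝ) ^ (n + 2))⁻¹ * (2 : ℝ) ^ (-(K : ℤ)) = (2 : ℝ) ^ (-((K + n + 2 : ℕ) : ℤ)) := by
      rw [← zpow_natCast (2:ℝ) (n+2), ← zpow_neg, ← zpow_add₀ (by norm_num : (2:ℝ) ≠ 0)]
      congr 1; push_cast; ring
    calc rho y y₀ < ((2 : ℝ) ^ (n + 2))⁻¹ * ε := hy
      _ < _ := h1
      _ = _ := h2
  have hagree : ∀ i ≤ K + n + 2, y i = y₀ i := agree_of_rho_lt y y₀ _ hyy₀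
  constructor
  · -- y ∈ ball x₀ ε
    have h1 : ∀ i < K + 2, y i = x₀ i := by
      intro i hi
      rw [hagree i (by omega)]
      simp only [hy₀]
      rw [if_pos (by omega)]
    have h2 := rho_le_of_agree y x₀ (K + 2) h1
    have h3 : (2 : ℝ) ^ (-((K + 2 : ℕ) : ℤ)) < (2 : ℝ) ^ (-((K : ℤ) + 1)) := by
      apply zpow_lt_zpow_right₀ (by norm_num : (1:ℝ) < 2)
      push_cast; omega
    exact lt_of_le_of_lt h2 (lt_of_lt_of_le h3 hKε)
  · -- y ∉ ESet n, i.e. HasAP y n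
    intro hE
    apply hE
    refine ⟨K + 2, 1, one_pos, fun i hi => ?_⟩
    rw [hagree (K + 2 + i * 1) (by omega)]
    simp only [hy₀]
    rw [if_neg (by omega)]
end

section
/- Every ideal I on ω that, viewed as a subset of Cantor space, is σ-porous, is contained in Thick⁺. Equivalently: if an ideal I contains a thick set (a set containing arbitrarily long intervals), then I is not σ-porous in 2^ω. -/
open Classical Filter

/-! ### Auxiliary lemmas for Statement 13 -/

lemma rho_self' (x : ℕ → Bool) : rho x x = 0 := dif_pos rfl

lemma rho_lt_pow' {x y : ℕ → Bool} {n : ℕ} :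
    rho x y < (2 : ℝ) ^ (-(n : ℤ)) ↔ ∀ i ≤ n, x i = y i := by
  unfold rho
  split_ifs with h
  · simp only [h, implies_true, iff_true]
    positivity
  · rw [zpow_lt_zpow_iff_right₀ (by norm_num : (1:ℝ) < 2), neg_lt_neg_iff,
      Int.ofNat_lt, Nat.lt_find_iff]
    simp [not_not]

lemma step_exists' (x₀ : ℕ → Bool) (hth : ThickB x₀) {Fj : Set (ℕ → Bool)}
    (hFj : Porous Fj) (z : ℕ → Bool) (m : ℕ)
    (hz1 : ∀ n, z n = true → x₀ n = true) :
    ∃ (z' : ℕ → Bool) (m' : ℕ), m < m' ∧ (∀ i < m, z' i = z i) ∧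
      (∀ n, z' n = true → x₀ n = true) ∧ (∀ n, m' ≤ n → z' n = false) ∧
      (∀ w : ℕ → Bool, (∀ i < m', w i = z' i) → w ∉ Fj) := by
  obtain ⟨α, hα0, hα1, ε₀, hε0, hA⟩ := hFj
  obtain ⟨L, hL⟩ := exists_pow_lt_of_lt_one hα0 (by norm_num : (1/2 : ℝ) < 1)
  simp only [one_div, inv_pow] at hL
  have hL' : (2:ℝ) ^ (-(L:ℤ)) < α := by rwa [zpow_neg, zpow_natCast]
  obtain ⟨N, hN⟩ := exists_pow_lt_of_lt_one hε0 (by norm_num : (1/2 : ℝ) < 1)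
  simp only [one_div, inv_pow] at hN
  have hN' : (2:ℝ) ^ (-(N:ℤ)) ≤ ε₀ := by rw [zpow_neg, zpow_natCast]; exact hN.le
  obtain ⟨a, ha⟩ := hth (L + max m N)
  set n := a + max m N with hn
  set ε : ℝ := (2:ℝ) ^ (-(n:ℤ)) with hε
  have hεpos : 0 < ε := by positivity
  have hεle : ε ≤ ε₀ := by
    refine le_trans ?_ hN'
    apply zpow_le_zpow_right₀ (by norm_num : (1:ℝ) ≤ 2)
    have : N ≤ n := by omega
    omega
  obtain ⟨y, hy⟩ := hA ε hεpos hεle z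
  have hyz : ∀ i ≤ n, y i = z i := by
    have : y ∈ ball z ε \ Fj := hy (by simp only [ball, Set.mem_setOf_eq, rho_self']; positivity)
    exact rho_lt_pow'.mp this.1
  have hmn : m ≤ n := by omega
  refine ⟨fun i => if i < n + L + 1 then y i else false, n + L + 1, by omega, ?_, ?_, ?_, ?_⟩
  · intro i hi
    show (if i < n + L + 1 then y i else false) = z i
    rw [if_pos (by omega)]; exact hyz i (by omega)
  · intro i hi
    by_cases hilt : i < n + L + 1
    · replace hi : y i = true := by
        rw [show (fun i => if i < n + L + 1 then y i else false) i
          = (if i < n + L + 1 then y i else false) from rfl, if_pos hilt] at hi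
        exact hi
      by_cases hin : i ≤ n
      · exact hz1 i (by rw [← hyz i hin]; exact hi)
      · have hia : i = a + (i - a) := by omega
        rw [hia]; exact ha (i - a) (by omega)
    · exfalso
      rw [show (fun i => if i < n + L + 1 then y i else false) i
          = (if i < n + L + 1 then y i else false) from rfl, if_neg hilt] at hi
      exact absurd hi (by simp)
  · intro i hi
    show (if i < n + L + 1 then y i else false) = false
    rw [if_neg (by omega)]
  · intro w hw hwF
    have hwy : ∀ i ≤ n + L, w i = y i := by
      intro i hi
      rw [hw i (by omega)]
      show (if i < n + L + 1 then y i else false) = y i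
      rw [if_pos (by omega)]
    have hrw : rho w y < α * ε := by
      have h1 : rho w y < (2:ℝ) ^ (-((n + L : ℕ) : ℤ)) := rho_lt_pow'.mpr hwy
      refine h1.trans_le ?_
      have h2 : ((2:ℝ) ^ (-((n + L : ℕ) : ℤ))) = (2:ℝ) ^ (-(L:ℤ)) * ε := by
        rw [hε, ← zpow_add₀ (by norm_num : (2:ℝ) ≠ 0)]
        congr 1; push_cast; ring
      rw [h2]
      exact mul_le_mul_of_nonneg_right hL'.le hεpos.le
    exact (hy hrw).2 hwF

/-- States of the diagonal construction: a point of Cantor space that is a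
subset of `x₀`, together with a length marker. -/
def GoodState' (x₀ : ℕ → Bool) : Type :=
  {p : (ℕ → Bool) × ℕ // ∀ n, p.1 n = true → x₀ n = true}

noncomputable def nextState' (x₀ : ℕ → Bool) (hth : ThickB x₀) {Fj : Set (ℕ → Bool)}
    (hFj : Porous Fj) (p : GoodState' x₀) : GoodState' x₀ :=
  ⟨(choose (step_exists' x₀ hth hFj p.1.1 p.1.2 p.2),
    choose (choose_spec (step_exists' x₀ hth hFj p.1.1 p.1.2 p.2))),
   (choose_spec (choose_spec (step_exists' x₀ hth hFj p.1.1 p.1.2 p.2))).2.2.1⟩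

lemma nextState_spec' (x₀ : ℕ → Bool) (hth : ThickB x₀) {Fj : Set (ℕ → Bool)}
    (hFj : Porous Fj) (p : GoodState' x₀) :
    p.1.2 < (nextState' x₀ hth hFj p).1.2 ∧
    (∀ i < p.1.2, (nextState' x₀ hth hFj p).1.1 i = p.1.1 i) ∧
    (∀ w : ℕ → Bool, (∀ i < (nextState' x₀ hth hFj p).1.2,
        w i = (nextState' x₀ hth hFj p).1.1 i) → w ∉ Fj) := by
  have h := choose_spec (choose_spec (step_exists' x₀ hth hFj p.1.1 p.1.2 p.2))
  exact ⟨h.1, h.2.1, h.2.2.2.2⟩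

/-- Every σ-porous ideal is contained in Thick⁺. -/
theorem sigmaPorous_ideal_subset_thickPlus (I : Set (ℕ → Bool))
    (hI : IsIdealB I) (hp : SigmaPorous I) :
    ∀ x ∈ I, ¬ ThickB x := by
  rintro x₀ hx₀ hth
  obtain ⟨F, hF, hsub⟩ := hp
  set S : ℕ → GoodState' x₀ := fun j =>
    Nat.rec (⟨(fun _ => false, 0), fun _ h => absurd h (by simp)⟩ : GoodState' x₀)
      (fun j ih => nextState' x₀ hth (hF j) ih) j with hS
  have hSsucc : ∀ j, S (j + 1) = nextState' x₀ hth (hF j) (S j) := fun j => rfl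
  have hmono : ∀ j, (S j).1.2 < (S (j + 1)).1.2 := by
    intro j; rw [hSsucc]; exact (nextState_spec' x₀ hth (hF j) (S j)).1
  have hagree : ∀ j, ∀ i < (S j).1.2, (S (j + 1)).1.1 i = (S j).1.1 i := by
    intro j; rw [hSsucc]; exact (nextState_spec' x₀ hth (hF j) (S j)).2.1
  have havoid : ∀ j, ∀ w : ℕ → Bool,
      (∀ i < (S (j + 1)).1.2, w i = (S (j + 1)).1.1 i) → w ∉ F j := by
    intro j; rw [hSsucc]; exact (nextState_spec' x₀ hth (hF j) (S j)).2.2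
  have hmge : ∀ j, j ≤ (S j).1.2 := by
    intro j; induction j with
    | zero => exact Nat.zero_le _
    | succ j ih => exact Nat.lt_of_le_of_lt ih (hmono j)
  have hmono' : ∀ j j', j ≤ j' → (S j).1.2 ≤ (S j').1.2 := by
    intro j j' h
    induction h with
    | refl => exact le_rfl
    | step h ih => exact le_trans ih (hmono _).le
  have hstab : ∀ j j', j ≤ j' → ∀ i < (S j).1.2, (S j').1.1 i = (S j).1.1 i := by
    intro j j' h
    induction h with
    | refl => intro i _; rfl
    | @step k h ih =>
      intro i hi
      have h1 : (S (k+1)).1.1 i = (S k).1.1 i :=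
        hagree k i (lt_of_lt_of_le hi (hmono' j k h))
      rw [h1]; exact ih i hi
  set z : ℕ → Bool := fun n => (S (n + 1)).1.1 n with hz
  have hzval : ∀ j, ∀ i < (S j).1.2, z i = (S j).1.1 i := by
    intro j i hi
    rcases le_or_gt j (i + 1) with h | h
    · exact hstab j (i + 1) h i hi
    · exact (hstab (i + 1) j h.le i (lt_of_lt_of_le (Nat.lt_succ_self i) (hmge (i+1)))).symm
  have hzsub : ∀ n, z n = true → x₀ n = true := fun n h => (S (n + 1)).2 n h
  have hzI : z ∈ I := hI.2.1 z x₀ hzsub hx₀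
  obtain ⟨_, ⟨j, rfl⟩, hjz⟩ := hsub hzI
  exact havoid j z (fun i hi => hzval (j + 1) i hi) hjz
end
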